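/- Let R ∈ (1/2, 1) and γ ∈ [0,1) with γ < 2(1−R), and for each integer n ≥ 1 let Yₙ be the unique real number satisfying γ·Φ(Yₙ) + (1−γ)·Φ(√n·Yₙ) = R. Then Yₙ → 0 (equivalently Φ(Yₙ) → 1/2) and Φ(√n·Yₙ) → 1 − ((1−R) − γ/2)/(1−γ) as n → ∞. -/

import Mathlib

open MeasureTheory ProbabilityTheory Real Filter

/-- The cdf `Φ` of the standard normal distribution. -/
noncomputable def stdNormalCDF (x : ℝ) : ℝ := ProbabilityTheory.cdf (gaussianReal 0 1) x

lemma stdNormal_measure_Iic_zero : (gaussianReal 0 1) (Set.Iic 0) = 1/2 := by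
  have hmap : (gaussianReal (0:ℝ) 1).map ((-1 : ℝ) * ·) = gaussianReal 0 1 := by
    rw [gaussianReal_map_const_mul (-1)]
    norm_num
  have hIci : (gaussianReal (0:ℝ) 1) (Set.Ici 0) = (gaussianReal (0:ℝ) 1) (Set.Iic 0) := by
    conv_rhs => rw [← hmap]
    rw [Measure.map_apply (by fun_prop) measurableSet_Iic]
    congr 1
    ext x
    simp
  have hsing : (gaussianReal (0:ℝ) 1) {(0:ℝ)} = 0 :=
    gaussianReal_absolutelyContinuous 0 one_ne_zero (Real.volume_singleton)
  haveI : NullSingletonClass (gaussianReal (0:ℝ) 1) :=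
    ⟨fun x => gaussianReal_absolutelyContinuous 0 one_ne_zero (Real.volume_singleton)⟩
  have hIoi : (gaussianReal (0:ℝ) 1) (Set.Ioi 0) = (gaussianReal (0:ℝ) 1) (Set.Ici 0) :=
    measure_congr Ioi_ae_eq_Ici
  have htot : (gaussianReal (0:ℝ) 1) (Set.Iic 0) + (gaussianReal (0:ℝ) 1) (Set.Ioi 0) = 1 := by
    rw [← measure_union (by simp [Set.disjoint_left]) measurableSet_Ioi]
    simp [Set.Iic_union_Ioi]
  rw [hIoi, hIci] at htot
  have h2 : 2 * (gaussianReal (0:ℝ) 1) (Set.Iic 0) = 1 := by rw [two_mul]; exact htot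
  rw [ENNReal.eq_div_iff (by norm_num) (by norm_num)]
  exact h2

lemma stdNormalCDF_zero : stdNormalCDF 0 = 1/2 := by
  rw [stdNormalCDF, cdf_eq_real, measureReal_def, stdNormal_measure_Iic_zero]
  simp [ENNReal.toReal_div]

lemma stdNormalCDF_mono : Monotone stdNormalCDF := monotone_cdf _

/-- **Theorem 5, over-mean case, `t/2 < c - ν`.** For `R ∈ (1/2,1)` and
`γ < 2(1-R)`, the solutions `Yₙ` of `γ Φ(Yₙ) + (1-γ) Φ(√n Yₙ) = R` satisfy `Yₙ → 0`
(equivalently `Φ(Yₙ) → 1/2`) and `Φ(√n Yₙ) → 1 - ((1-R) - γ/2)/(1-γ)`. -/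
theorem limit_over_mean_below_cut
    (R γ : ℝ) (hR : R ∈ Set.Ioo (1 / 2 : ℝ) 1) (hγ : γ ∈ Set.Ico (0 : ℝ) 1)
    (hcut : γ < 2 * (1 - R)) (Y : ℕ → ℝ)
    (hY : ∀ n : ℕ, 1 ≤ n →
      γ * stdNormalCDF (Y n) + (1 - γ) * stdNormalCDF (Real.sqrt n * Y n) = R) :
    Tendsto Y atTop (nhds 0) ∧
      Tendsto (fun n : ℕ => stdNormalCDF (Y n)) atTop (nhds (1 / 2)) ∧
      Tendsto (fun n : ℕ => stdNormalCDF (Real.sqrt n * Y n)) atTop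
        (nhds (1 - ((1 - R) - γ / 2) / (1 - γ))) := by
  obtain ⟨hR1, hR2⟩ := hR
  obtain ⟨hγ0, hγ1⟩ := hγ
  have hΦ0 : stdNormalCDF 0 = 1/2 := stdNormalCDF_zero
  have hmono : Monotone stdNormalCDF := stdNormalCDF_mono
  have h1γ : (0:ℝ) < 1 - γ := by linarith
  -- positivity of Y n
  have hpos : ∀ n : ℕ, 1 ≤ n → 0 < Y n := by
    intro n hn
    by_contra h
    push_neg at h
    have h1 : stdNormalCDF (Y n) ≤ 1/2 := by
      have := hmono h; rwa [hΦ0] at this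
    have h2 : stdNormalCDF (Real.sqrt n * Y n) ≤ 1/2 := by
      have hle : Real.sqrt n * Y n ≤ 0 :=
        mul_nonpos_of_nonneg_of_nonpos (Real.sqrt_nonneg _) h
      have := hmono hle; rwa [hΦ0] at this
    have heq := hY n hn
    nlinarith
  have hL : (R - γ/2)/(1-γ) < 1 := by
    rw [div_lt_one h1γ]; linarith
  have hk : (1-γ) * ((R - γ/2)/(1-γ)) = R - γ/2 := mul_div_cancel₀ _ (ne_of_gt h1γ)
  -- tendsto Y → 0
  have hY0 : Tendsto Y atTop (nhds 0) := by
    rw [Metric.tendsto_atTop]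
    intro ε hε
    have hsq0 : Tendsto Real.sqrt atTop atTop :=
      (tendsto_rpow_atTop (by norm_num : (0:ℝ) < 1/2)).congr
        (fun x => (Real.sqrt_eq_rpow x).symm)
    have hsq1 : Tendsto (fun n : ℕ => Real.sqrt n) atTop atTop :=
      hsq0.comp tendsto_natCast_atTop_atTop
    have hsq : Tendsto (fun n : ℕ => Real.sqrt n * ε) atTop atTop :=
      hsq1.atTop_mul_const hε
    have hcdf : Tendsto (fun n : ℕ => stdNormalCDF (Real.sqrt n * ε)) atTop (nhds 1) :=
      (tendsto_cdf_atTop (gaussianReal 0 1)).comp hsq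
    have hev : ∀ᶠ n : ℕ in atTop, (R - γ/2)/(1-γ) < stdNormalCDF (Real.sqrt n * ε) :=
      hcdf.eventually (eventually_gt_nhds hL)
    obtain ⟨N, hN⟩ := (hev.and (eventually_ge_atTop 1)).exists_forall_of_atTop
    refine ⟨N, fun n hn => ?_⟩
    obtain ⟨hNc, hn1⟩ := hN n hn
    have hYpos := hpos n hn1
    have hYlt : Y n < ε := by
      by_contra hge
      push_neg at hge
      have hA : stdNormalCDF (Real.sqrt n * ε) ≤ stdNormalCDF (Real.sqrt n * Y n) :=
        hmono (mul_le_mul_of_nonneg_left hge (Real.sqrt_nonneg _))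
      have hB : (1/2 : ℝ) ≤ stdNormalCDF (Y n) := by
        have := hmono (le_trans (le_of_lt hε) hge : (0:ℝ) ≤ Y n)
        rwa [hΦ0] at this
      have heq := hY n hn1
      nlinarith [mul_le_mul_of_nonneg_left hB hγ0,
        mul_lt_mul_of_pos_left (lt_of_lt_of_le hNc hA) h1γ]
    rw [Real.dist_eq]
    rw [abs_of_pos (by linarith : (0:ℝ) < Y n - 0)]
    linarith
  -- tendsto Φ(Y n) → 1/2
  have hYin : Tendsto Y atTop (nhdsWithin 0 (Set.Ici 0)) :=
    tendsto_nhdsWithin_iff.mpr ⟨hY0,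
      (eventually_ge_atTop 1).mono fun n hn => le_of_lt (hpos n hn)⟩
  have hΦY : Tendsto (fun n : ℕ => stdNormalCDF (Y n)) atTop (nhds (1/2)) := by
    have h := ((ProbabilityTheory.cdf (gaussianReal 0 1)).right_continuous 0).tendsto.comp hYin
    have h0 : (ProbabilityTheory.cdf (gaussianReal 0 1)) 0 = 1/2 := hΦ0
    rw [h0] at h
    exact h
  refine ⟨hY0, hΦY, ?_⟩
  -- tendsto Φ(√n Y n)
  have hglim : Tendsto (fun n : ℕ => (R - γ * stdNormalCDF (Y n))/(1-γ)) atTop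
      (nhds ((R - γ * (1/2))/(1-γ))) :=
    (tendsto_const_nhds.sub (hΦY.const_mul γ)).div_const (1-γ)
  have heq : (R - γ * (1/2))/(1-γ) = 1 - ((1 - R) - γ / 2) / (1 - γ) := by
    field_simp
    ring
  rw [← heq]
  refine hglim.congr' ?_
  filter_upwards [eventually_ge_atTop 1] with n hn
  have h := hY n hn
  field_simp
  linarith
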